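/- (Lemma C.9, Descent Lemma) Under Assumptions 1 and 2, suppose for every labeled example (x, y) the map θ ↦ ℓ(f_θ(x); y) is differentiable with gradient ∇_θ ℓ(f_θ(x); y) = (∂ℓ/∂f)(f_θ(x); y) · ∇_θ f_θ(x). Then for all θ₁, θ₂ ∈ ℝ^K and every labeled example (x, y): ℓ(f_{θ₁}(x); y) − ℓ(f_{θ₂}(x); y) ≤ ⟨∇_θ ℓ(f_{θ₂}(x); y), θ₁ − θ₂⟩ + (κ/2) ‖θ₁ − θ₂‖₂², where κ = α_ℓ K ‖O‖ + √2 ν_ℓ K ‖O‖². -/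

import Mathlib

open scoped Matrix Matrix.Norms.L2Operator ComplexOrder
open Finset

noncomputable section

/-- The rotation gate `e^{-i θ P / 2}` generated by a matrix `P`. -/
def rotGate {N : ℕ} (P : Matrix (Fin (2^N)) (Fin (2^N)) ℂ) (θ : ℝ) :
    Matrix (Fin (2^N)) (Fin (2^N)) ℂ :=
  NormedSpace.exp ((-(θ / 2 : ℂ) * Complex.I) • P)

/-- The parameterized circuit `U(θ) = V₁ e^{-iθ₁P₁/2} V₂ ⋯ V_K e^{-iθ_K P_K/2} V_{K+1}`. -/
def circuit {N K : ℕ} (V : Fin (K + 1) → Matrix (Fin (2^N)) (Fin (2^N)) ℂ)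
    (P : Fin K → Matrix (Fin (2^N)) (Fin (2^N)) ℂ) (θ : EuclideanSpace ℝ (Fin K)) :
    Matrix (Fin (2^N)) (Fin (2^N)) ℂ :=
  (List.ofFn fun k : Fin K => V k.castSucc * rotGate (P k) (θ k)).prod * V (Fin.last K)

/-- QNN output `f_θ(x) = Tr(O U(θ) ρ(x) U(θ)†)` (a real number). -/
def qnnOut {N K : ℕ} (V : Fin (K + 1) → Matrix (Fin (2^N)) (Fin (2^N)) ℂ)
    (P : Fin K → Matrix (Fin (2^N)) (Fin (2^N)) ℂ)
    (O ρ : Matrix (Fin (2^N)) (Fin (2^N)) ℂ) (θ : EuclideanSpace ℝ (Fin K)) : ℝ :=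
  ((O * circuit V P θ * ρ * (circuit V P θ)ᴴ).trace).re

/-- Parameter-shift gradient of the QNN output, as a vector in `ℝ^K`. -/
def qnnGrad {N K : ℕ} (V : Fin (K + 1) → Matrix (Fin (2^N)) (Fin (2^N)) ℂ)
    (P : Fin K → Matrix (Fin (2^N)) (Fin (2^N)) ℂ)
    (O ρ : Matrix (Fin (2^N)) (Fin (2^N)) ℂ) (θ : EuclideanSpace ℝ (Fin K)) :
    EuclideanSpace ℝ (Fin K) :=
  (WithLp.equiv 2 (Fin K → ℝ)).symm fun j =>
    (qnnOut V P O ρ (θ + (Real.pi / 2) • EuclideanSpace.single j 1)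
      - qnnOut V P O ρ (θ - (Real.pi / 2) • EuclideanSpace.single j 1)) / 2


/-- Loss gradient `∇_θ ℓ(f_θ(x); y) = (∂ℓ/∂f)(f_θ(x); y) • ∇_θ f_θ(x)`, where `dℓ` is
the derivative of the loss in its first argument and the gradient of `f` is the
parameter-shift gradient. -/
def lossGrad {N K : ℕ} {Y : Type*} (V : Fin (K + 1) → Matrix (Fin (2^N)) (Fin (2^N)) ℂ)
    (P : Fin K → Matrix (Fin (2^N)) (Fin (2^N)) ℂ)
    (O : Matrix (Fin (2^N)) (Fin (2^N)) ℂ) (dℓ : ℝ → Y → ℝ)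
    (ρ : Matrix (Fin (2^N)) (Fin (2^N)) ℂ) (y : Y) (θ : EuclideanSpace ℝ (Fin K)) :
    EuclideanSpace ℝ (Fin K) :=
  dℓ (qnnOut V P O ρ θ) y • qnnGrad V P O ρ θ


open scoped RealInnerProductSpace in
open scoped RealInnerProductSpace in

lemma descent_core {F : Type*} [NormedAddCommGroup F] [InnerProductSpace ℝ F]
    [CompleteSpace F]
    (f : F → ℝ) (g : F → F) (L : ℝ) (hL : 0 ≤ L)
    (hgrad : ∀ x, HasGradientAt f (g x) x)
    (hlip : ∀ x x', ‖g x - g x'‖ ≤ L * ‖x - x'‖) (a b : F) :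
    f b - f a ≤ ⟪g a, b - a⟫ + L / 2 * ‖b - a‖ ^ 2 := by
  set Δ := b - a with hΔ
  set line : ℝ → F := fun t => a + t • Δ with hline
  have hlinederiv : ∀ t : ℝ, HasDerivAt line Δ t := fun t => by
    rw [hline]
    simpa using ((hasDerivAt_id t).smul_const Δ).const_add a
  have hφ : ∀ t : ℝ, HasDerivAt (fun t => f (line t)) ⟪g (line t), Δ⟫ t := by
    intro t
    have h1 := (hgrad (line t)).hasFDerivAt.comp_hasDerivAt t (hlinederiv t)
    simp only [InnerProductSpace.toDual_apply_apply] at h1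
    exact h1
  set c := ⟪g a, Δ⟫ with hc
  set ψ : ℝ → ℝ := fun t => f (line t) - t * c - L * ‖Δ‖ ^ 2 * t ^ 2 / 2 with hψdef
  have hψ : ∀ t : ℝ, HasDerivAt ψ (⟪g (line t), Δ⟫ - c - L * ‖Δ‖ ^ 2 * t) t := by
    intro t
    have h2 : HasDerivAt (fun t : ℝ => t * c) c t := by
      simpa using (hasDerivAt_id t).mul_const c
    have h3 : HasDerivAt (fun t : ℝ => L * ‖Δ‖ ^ 2 * t ^ 2 / 2) (L * ‖Δ‖ ^ 2 * t) t := by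
      have := (hasDerivAt_pow 2 t).const_mul (L * ‖Δ‖ ^ 2 / 2)
      have h3' : (fun t : ℝ => L * ‖Δ‖ ^ 2 * t ^ 2 / 2) = fun y => L * ‖Δ‖ ^ 2 / 2 * y ^ 2 := by
        funext u; ring
      have e : L * ‖Δ‖ ^ 2 * t = L * ‖Δ‖ ^ 2 / 2 * ((2 : ℕ) * t ^ (2 - 1)) := by
        rw [show (2:ℕ) - 1 = 1 from rfl]; push_cast; ring
      rw [h3', e]
      exact this
    exact ((hφ t).sub h2).sub h3
  have hmono : AntitoneOn ψ (Set.Icc 0 1) := by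
    refine antitoneOn_of_deriv_nonpos (convex_Icc 0 1)
      (fun t _ => ((hψ t).differentiableAt).continuousAt.continuousWithinAt)
      (fun t _ => ((hψ t).differentiableAt).differentiableWithinAt) ?_
    intro t ht
    rw [interior_Icc] at ht
    rw [(hψ t).deriv]
    have hip : ⟪g (line t), Δ⟫ - c ≤ L * ‖Δ‖ ^ 2 * t := by
      rw [hc, ← inner_sub_left]
      calc ⟪g (line t) - g a, Δ⟫ ≤ ‖g (line t) - g a‖ * ‖Δ‖ := real_inner_le_norm _ _
        _ ≤ (L * ‖line t - a‖) * ‖Δ‖ := by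
            gcongr
            exact hlip _ _
        _ = L * ‖Δ‖ ^ 2 * t := by
            have : line t - a = t • Δ := by rw [hline]; simp
            rw [this, norm_smul, Real.norm_eq_abs, abs_of_pos ht.1]
            ring
    linarith
  have h01 := hmono (Set.mem_Icc.mpr ⟨le_refl 0, zero_le_one⟩)
    (Set.mem_Icc.mpr ⟨zero_le_one, le_refl 1⟩) zero_le_one
  have hψ0 : ψ 0 = f a := by simp [hψdef, hline]
  have hψ1 : ψ 1 = f b - c - L * ‖Δ‖ ^ 2 / 2 := by
    have : line 1 = b := by rw [hline]; simp [hΔ]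
    simp [hψdef, this]
  rw [hψ0, hψ1] at h01
  rw [hc] at *
  linarith

namespace QnnAux

variable {N K : ℕ}

instance : Nonempty (Fin (2^N)) := ⟨⟨0, pow_pos (by norm_num) N⟩⟩

/-! ### Rotation gate lemmas -/

lemma rotGate_eq_exp_real (P : Matrix (Fin (2^N)) (Fin (2^N)) ℂ) (θ : ℝ) :
    rotGate P θ = NormedSpace.exp (θ • (((-(1/2) : ℂ) * Complex.I) • P)) := by
  rw [rotGate]
  congr 1
  have h : (θ : ℂ) • (((-(1/2) : ℂ) * Complex.I) • P) = θ • (((-(1/2) : ℂ) * Complex.I) • P) := by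
    simp
  rw [← h, smul_smul]
  congr 1
  ring

lemma rotGate_conjTranspose (P : Matrix (Fin (2^N)) (Fin (2^N)) ℂ) (hPH : P.IsHermitian)
    (θ : ℝ) : (rotGate P θ)ᴴ = rotGate P (-θ) := by
  rw [rotGate, rotGate, ← Matrix.exp_conjTranspose]
  congr 1
  rw [Matrix.conjTranspose_smul, hPH.eq]
  congr 1
  simp [Complex.ext_iff]
  ring_nf

lemma rotGate_mul (P : Matrix (Fin (2^N)) (Fin (2^N)) ℂ) (a b : ℝ) :
    rotGate P a * rotGate P b = rotGate P (a + b) := by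
  rw [rotGate, rotGate, rotGate, ← Matrix.exp_add_of_commute]
  · congr 1
    rw [← add_smul]
    congr 1
    push_cast
    ring
  · exact ((Commute.refl P).smul_left _).smul_right _

lemma rotGate_mem (P : Matrix (Fin (2^N)) (Fin (2^N)) ℂ) (hPH : P.IsHermitian) (θ : ℝ) :
    rotGate P θ ∈ Matrix.unitaryGroup (Fin (2^N)) ℂ := by
  constructor
  · show (rotGate P θ)ᴴ * rotGate P θ = 1
    rw [rotGate_conjTranspose P hPH, rotGate_mul, neg_add_cancel, rotGate]
    simp [NormedSpace.exp_zero]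
  · show rotGate P θ * (rotGate P θ)ᴴ = 1
    rw [rotGate_conjTranspose P hPH, rotGate_mul, add_neg_cancel, rotGate]
    simp [NormedSpace.exp_zero]

lemma norm_rotGate (P : Matrix (Fin (2^N)) (Fin (2^N)) ℂ) (hPH : P.IsHermitian) (θ : ℝ) :
    ‖rotGate P θ‖ = 1 :=
  CStarRing.norm_of_mem_unitary (rotGate_mem P hPH θ)

lemma rotGate_sub_norm (P : Matrix (Fin (2^N)) (Fin (2^N)) ℂ) (hPH : P.IsHermitian)
    (hPU : P ∈ Matrix.unitaryGroup (Fin (2^N)) ℂ) (a b : ℝ) :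
    ‖rotGate P a - rotGate P b‖ ≤ |a - b| / 2 := by
  set x : Matrix (Fin (2^N)) (Fin (2^N)) ℂ := ((-(1/2) : ℂ) * Complex.I) • P with hx
  have hd : ∀ t ∈ (Set.univ : Set ℝ),
      HasDerivWithinAt (fun u : ℝ => NormedSpace.exp (u • x))
        (NormedSpace.exp (t • x) * x) Set.univ t := fun t _ =>
    (hasDerivAt_exp_smul_const x t).hasDerivWithinAt
  have hnx : ‖x‖ = 1/2 := by
    rw [hx, norm_smul, CStarRing.norm_of_mem_unitary hPU]
    simp
  have hb : ∀ t ∈ (Set.univ : Set ℝ),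
      ‖NormedSpace.exp (t • x) * x‖ ≤ 1/2 := by
    intro t _
    calc ‖NormedSpace.exp (t • x) * x‖ ≤ ‖NormedSpace.exp (t • x)‖ * ‖x‖ := norm_mul_le _ _
    _ = 1/2 := by
        rw [← rotGate_eq_exp_real, norm_rotGate P hPH, hnx, one_mul]
  have := Convex.norm_image_sub_le_of_norm_hasDerivWithin_le hd hb convex_univ
    (Set.mem_univ b) (Set.mem_univ a)
  rw [← rotGate_eq_exp_real, ← rotGate_eq_exp_real] at this
  calc ‖rotGate P a - rotGate P b‖ ≤ 1/2 * ‖a - b‖ := this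
  _ = |a - b| / 2 := by rw [Real.norm_eq_abs]; ring

/-! ### List product lemmas -/

lemma norm_ofFn_prod_le_one {m : ℕ} (f : Fin m → Matrix (Fin (2^N)) (Fin (2^N)) ℂ)
    (hf : ∀ k, ‖f k‖ ≤ 1) : ‖(List.ofFn f).prod‖ ≤ 1 := by
  induction m with
  | zero => simp
  | succ m ih =>
    rw [List.ofFn_succ, List.prod_cons]
    calc ‖f 0 * (List.ofFn fun i : Fin m => f i.succ).prod‖
        ≤ ‖f 0‖ * ‖(List.ofFn fun i : Fin m => f i.succ).prod‖ := norm_mul_le _ _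
      _ ≤ 1 * 1 := mul_le_mul (hf 0) (ih _ fun k => hf k.succ)
          (norm_nonneg _) zero_le_one
      _ = 1 := one_mul 1

lemma norm_ofFn_prod_sub {m : ℕ} (f g : Fin m → Matrix (Fin (2^N)) (Fin (2^N)) ℂ)
    (hf : ∀ k, ‖f k‖ ≤ 1) (hg : ∀ k, ‖g k‖ ≤ 1) :
    ‖(List.ofFn f).prod - (List.ofFn g).prod‖ ≤ ∑ k, ‖f k - g k‖ := by
  induction m with
  | zero => simp
  | succ m ih =>
    rw [List.ofFn_succ, List.ofFn_succ, List.prod_cons, List.prod_cons, Fin.sum_univ_succ]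
    set F := (List.ofFn fun i : Fin m => f i.succ).prod
    set G := (List.ofFn fun i : Fin m => g i.succ).prod
    have key : f 0 * F - g 0 * G = (f 0 - g 0) * F + g 0 * (F - G) := by noncomm_ring
    rw [key]
    calc ‖(f 0 - g 0) * F + g 0 * (F - G)‖
        ≤ ‖(f 0 - g 0) * F‖ + ‖g 0 * (F - G)‖ := norm_add_le _ _
      _ ≤ ‖f 0 - g 0‖ * ‖F‖ + ‖g 0‖ * ‖F - G‖ := add_le_add (norm_mul_le _ _) (norm_mul_le _ _)
      _ ≤ ‖f 0 - g 0‖ * 1 + 1 * ‖F - G‖ := by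
          gcongr
          · exact norm_ofFn_prod_le_one _ fun k => hf k.succ
          · exact hg 0
      _ ≤ ‖f 0 - g 0‖ + ∑ i : Fin m, ‖f i.succ - g i.succ‖ := by
          rw [mul_one, one_mul]
          gcongr
          exact ih _ _ (fun k => hf k.succ) (fun k => hg k.succ)

/-! ### Trace bound -/

lemma equiv_symm_apply (x : Fin (2^N) → ℂ) (j : Fin (2^N)) :
    (EuclideanSpace.equiv (Fin (2^N)) ℂ).symm x j = x j := rfl

open scoped MatrixOrder in
lemma trace_norm_le (M ρ : Matrix (Fin (2^N)) (Fin (2^N)) ℂ) (hρ : ρ.PosSemidef)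
    (hρtr : ρ.trace = 1) : ‖(M * ρ).trace‖ ≤ ‖M‖ := by
  set S := CFC.sqrt ρ with hSdef
  have hS : S * S = ρ := CFC.sqrt_mul_sqrt_self ρ (Matrix.nonneg_iff_posSemidef.mpr hρ)
  have hSh : S.IsHermitian := (Matrix.nonneg_iff_posSemidef.mp (CFC.sqrt_nonneg ρ)).1
  set v : Fin (2^N) → EuclideanSpace ℂ (Fin (2^N)) :=
    fun i => (EuclideanSpace.equiv (Fin (2^N)) ℂ).symm (fun j => S j i) with hv
  have hentry : ∀ i, (S * (M * S)) i i = inner (𝕜 := ℂ) (v i)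
      ((EuclideanSpace.equiv (Fin (2^N)) ℂ).symm (M *ᵥ (v i))) := by
    intro i
    simp only [PiLp.inner_apply, RCLike.inner_apply, Matrix.mul_apply, Matrix.mulVec,
      dotProduct, hv, equiv_symm_apply]
    refine Finset.sum_congr rfl fun j _ => ?_
    have : (starRingEnd ℂ) (S j i) = S i j := by
      conv_rhs => rw [← hSh.eq]
      simp [Matrix.conjTranspose_apply]
    rw [this]
    exact mul_comm _ _
  have htr : (M * ρ).trace = (S * (M * S)).trace := by
    rw [← hS, ← mul_assoc, Matrix.trace_mul_comm]
  have hvnorm : ∑ i, ‖v i‖ ^ 2 = 1 := by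
    have h1 : ∀ i, (‖v i‖ ^ 2 : ℂ) = inner (𝕜 := ℂ) (v i) (v i) := fun i =>
      (inner_self_eq_norm_sq_to_K (𝕜 := ℂ) (v i)).symm
    have h2 : ∑ i, (inner (𝕜 := ℂ) (v i) (v i)) = ρ.trace := by
      rw [← hS]
      simp only [PiLp.inner_apply, RCLike.inner_apply, hv, equiv_symm_apply, Matrix.trace,
        Matrix.diag, Matrix.mul_apply]
      refine Finset.sum_congr rfl fun i _ => Finset.sum_congr rfl fun j _ => ?_
      have : (starRingEnd ℂ) (S j i) = S i j := by
        conv_rhs => rw [← hSh.eq]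
        simp [Matrix.conjTranspose_apply]
      rw [this]
      exact mul_comm _ _
    have : ((∑ i, ‖v i‖ ^ 2 : ℝ) : ℂ) = 1 := by
      push_cast
      rw [Finset.sum_congr rfl fun i _ => h1 i, h2, hρtr]
    exact_mod_cast this
  rw [htr]
  calc ‖(S * (M * S)).trace‖ ≤ ∑ i, ‖(S * (M * S)) i i‖ := by
        rw [Matrix.trace]
        exact norm_sum_le _ _
    _ ≤ ∑ i, ‖M‖ * ‖v i‖ ^ 2 := by
        refine Finset.sum_le_sum fun i _ => ?_
        rw [hentry i]
        calc ‖inner (𝕜 := ℂ) (v i) ((EuclideanSpace.equiv (Fin (2^N)) ℂ).symm (M *ᵥ (v i)))‖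
            ≤ ‖v i‖ * ‖(EuclideanSpace.equiv (Fin (2^N)) ℂ).symm (M *ᵥ (v i))‖ :=
              norm_inner_le_norm _ _
          _ ≤ ‖v i‖ * (‖M‖ * ‖v i‖) := by
              gcongr
              exact Matrix.l2_opNorm_mulVec M (v i)
          _ = ‖M‖ * ‖v i‖ ^ 2 := by ring
    _ = ‖M‖ := by rw [← Finset.mul_sum, hvnorm, mul_one]

end QnnAux

namespace QnnAux

variable {N K : ℕ}

/-! ### Circuit lemmas -/

lemma circuit_mem (V : Fin (K + 1) → Matrix (Fin (2^N)) (Fin (2^N)) ℂ)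
    (hV : ∀ k, V k ∈ Matrix.unitaryGroup (Fin (2^N)) ℂ)
    (P : Fin K → Matrix (Fin (2^N)) (Fin (2^N)) ℂ)
    (hPH : ∀ k, (P k).IsHermitian) (θ : EuclideanSpace ℝ (Fin K)) :
    circuit V P θ ∈ Matrix.unitaryGroup (Fin (2^N)) ℂ := by
  refine mul_mem ?_ (hV _)
  refine Submonoid.list_prod_mem _ fun x hx => ?_
  rw [List.mem_ofFn] at hx
  obtain ⟨k, rfl⟩ := hx
  exact mul_mem (hV _) (rotGate_mem _ (hPH k) _)

lemma norm_circuit (V : Fin (K + 1) → Matrix (Fin (2^N)) (Fin (2^N)) ℂ)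
    (hV : ∀ k, V k ∈ Matrix.unitaryGroup (Fin (2^N)) ℂ)
    (P : Fin K → Matrix (Fin (2^N)) (Fin (2^N)) ℂ)
    (hPH : ∀ k, (P k).IsHermitian) (θ : EuclideanSpace ℝ (Fin K)) :
    ‖circuit V P θ‖ = 1 :=
  CStarRing.norm_of_mem_unitary (circuit_mem V hV P hPH θ)

lemma circuit_sub_norm (V : Fin (K + 1) → Matrix (Fin (2^N)) (Fin (2^N)) ℂ)
    (hV : ∀ k, V k ∈ Matrix.unitaryGroup (Fin (2^N)) ℂ)
    (P : Fin K → Matrix (Fin (2^N)) (Fin (2^N)) ℂ)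
    (hPH : ∀ k, (P k).IsHermitian)
    (hPU : ∀ k, P k ∈ Matrix.unitaryGroup (Fin (2^N)) ℂ)
    (θ θ' : EuclideanSpace ℝ (Fin K)) :
    ‖circuit V P θ - circuit V P θ'‖ ≤ (∑ k, |θ k - θ' k|) / 2 := by
  rw [circuit, circuit, ← sub_mul]
  set f : Fin K → Matrix (Fin (2^N)) (Fin (2^N)) ℂ :=
    fun k => V k.castSucc * rotGate (P k) (θ k) with hf
  set g : Fin K → Matrix (Fin (2^N)) (Fin (2^N)) ℂ :=
    fun k => V k.castSucc * rotGate (P k) (θ' k) with hg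
  have hf1 : ∀ k, ‖f k‖ ≤ 1 := fun k => by
    rw [hf]
    calc ‖V k.castSucc * rotGate (P k) (θ k)‖
        ≤ ‖V k.castSucc‖ * ‖rotGate (P k) (θ k)‖ := norm_mul_le _ _
      _ = 1 := by rw [CStarRing.norm_of_mem_unitary (hV _), norm_rotGate _ (hPH k), one_mul]
  have hg1 : ∀ k, ‖g k‖ ≤ 1 := fun k => by
    rw [hg]
    calc ‖V k.castSucc * rotGate (P k) (θ' k)‖
        ≤ ‖V k.castSucc‖ * ‖rotGate (P k) (θ' k)‖ := norm_mul_le _ _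
      _ = 1 := by rw [CStarRing.norm_of_mem_unitary (hV _), norm_rotGate _ (hPH k), one_mul]
  calc ‖((List.ofFn f).prod - (List.ofFn g).prod) * V (Fin.last K)‖
      ≤ ‖(List.ofFn f).prod - (List.ofFn g).prod‖ * ‖V (Fin.last K)‖ := norm_mul_le _ _
    _ = ‖(List.ofFn f).prod - (List.ofFn g).prod‖ := by
        rw [CStarRing.norm_of_mem_unitary (hV _), mul_one]
    _ ≤ ∑ k, ‖f k - g k‖ := norm_ofFn_prod_sub f g hf1 hg1
    _ ≤ ∑ k, |θ k - θ' k| / 2 := by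
        refine Finset.sum_le_sum fun k _ => ?_
        rw [hf, hg, ← mul_sub]
        calc ‖V k.castSucc * (rotGate (P k) (θ k) - rotGate (P k) (θ' k))‖
            ≤ ‖V k.castSucc‖ * ‖rotGate (P k) (θ k) - rotGate (P k) (θ' k)‖ := norm_mul_le _ _
          _ ≤ 1 * (|θ k - θ' k| / 2) := by
              rw [CStarRing.norm_of_mem_unitary (hV _)]
              gcongr
              exact rotGate_sub_norm (P k) (hPH k) (hPU k) _ _
          _ = |θ k - θ' k| / 2 := one_mul _
    _ = (∑ k, |θ k - θ' k|) / 2 := by rw [Finset.sum_div]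

/-! ### qnnOut bounds -/

lemma qnnOut_eq (V : Fin (K + 1) → Matrix (Fin (2^N)) (Fin (2^N)) ℂ)
    (P : Fin K → Matrix (Fin (2^N)) (Fin (2^N)) ℂ)
    (O ρ : Matrix (Fin (2^N)) (Fin (2^N)) ℂ) (θ : EuclideanSpace ℝ (Fin K)) :
    qnnOut V P O ρ θ =
      (((circuit V P θ)ᴴ * O * circuit V P θ * ρ).trace).re := by
  rw [qnnOut]
  congr 1
  rw [Matrix.trace_mul_cycle (O * circuit V P θ) ρ (circuit V P θ)ᴴ,
    mul_assoc (circuit V P θ)ᴴ O (circuit V P θ)]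

lemma conj_sandwich_norm_le (U U' O : Matrix (Fin (2^N)) (Fin (2^N)) ℂ)
    (hU : ‖U‖ = 1) (hU' : ‖U'‖ = 1) :
    ‖Uᴴ * O * U - U'ᴴ * O * U'‖ ≤ 2 * ‖O‖ * ‖U - U'‖ := by
  have key : Uᴴ * O * U - U'ᴴ * O * U' = Uᴴ * O * (U - U') + (U - U')ᴴ * O * U' := by
    rw [Matrix.conjTranspose_sub]
    noncomm_ring
  rw [key]
  calc ‖Uᴴ * O * (U - U') + (U - U')ᴴ * O * U'‖
      ≤ ‖Uᴴ * O * (U - U')‖ + ‖(U - U')ᴴ * O * U'‖ := norm_add_le _ _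
    _ ≤ ‖Uᴴ‖ * ‖O‖ * ‖U - U'‖ + ‖(U - U')ᴴ‖ * ‖O‖ * ‖U'‖ := by
        refine add_le_add ?_ ?_
        · calc ‖Uᴴ * O * (U - U')‖ ≤ ‖Uᴴ * O‖ * ‖U - U'‖ := norm_mul_le _ _
            _ ≤ ‖Uᴴ‖ * ‖O‖ * ‖U - U'‖ := by gcongr; exact norm_mul_le _ _
        · calc ‖(U - U')ᴴ * O * U'‖ ≤ ‖(U - U')ᴴ * O‖ * ‖U'‖ := norm_mul_le _ _
            _ ≤ ‖(U - U')ᴴ‖ * ‖O‖ * ‖U'‖ := by gcongr; exact norm_mul_le _ _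
    _ = 2 * ‖O‖ * ‖U - U'‖ := by
        rw [Matrix.l2_opNorm_conjTranspose, Matrix.l2_opNorm_conjTranspose, hU, hU']
        ring

lemma qnnOut_abs_le (V : Fin (K + 1) → Matrix (Fin (2^N)) (Fin (2^N)) ℂ)
    (hV : ∀ k, V k ∈ Matrix.unitaryGroup (Fin (2^N)) ℂ)
    (P : Fin K → Matrix (Fin (2^N)) (Fin (2^N)) ℂ)
    (hPH : ∀ k, (P k).IsHermitian)
    (O ρ : Matrix (Fin (2^N)) (Fin (2^N)) ℂ)
    (hρ : ρ.PosSemidef) (hρtr : ρ.trace = 1) (θ : EuclideanSpace ℝ (Fin K)) :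
    |qnnOut V P O ρ θ| ≤ ‖O‖ := by
  rw [qnnOut_eq]
  set U := circuit V P θ with hU
  have hUn : ‖U‖ = 1 := norm_circuit V hV P hPH θ
  calc |(((Uᴴ * O * U) * ρ).trace).re| ≤ ‖((Uᴴ * O * U) * ρ).trace‖ :=
        Complex.abs_re_le_norm _
    _ ≤ ‖Uᴴ * O * U‖ := trace_norm_le _ _ hρ hρtr
    _ ≤ ‖Uᴴ‖ * ‖O‖ * ‖U‖ := by
        calc ‖Uᴴ * O * U‖ ≤ ‖Uᴴ * O‖ * ‖U‖ := norm_mul_le _ _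
          _ ≤ ‖Uᴴ‖ * ‖O‖ * ‖U‖ := by gcongr; exact norm_mul_le _ _
    _ = ‖O‖ := by rw [Matrix.l2_opNorm_conjTranspose, hUn, one_mul, mul_one]

lemma qnnOut_sub_le (V : Fin (K + 1) → Matrix (Fin (2^N)) (Fin (2^N)) ℂ)
    (hV : ∀ k, V k ∈ Matrix.unitaryGroup (Fin (2^N)) ℂ)
    (P : Fin K → Matrix (Fin (2^N)) (Fin (2^N)) ℂ)
    (hPH : ∀ k, (P k).IsHermitian)
    (hPU : ∀ k, P k ∈ Matrix.unitaryGroup (Fin (2^N)) ℂ)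
    (O ρ : Matrix (Fin (2^N)) (Fin (2^N)) ℂ)
    (hρ : ρ.PosSemidef) (hρtr : ρ.trace = 1) (θ θ' : EuclideanSpace ℝ (Fin K)) :
    |qnnOut V P O ρ θ - qnnOut V P O ρ θ'| ≤ ‖O‖ * ∑ k, |θ k - θ' k| := by
  rw [qnnOut_eq, qnnOut_eq]
  set U := circuit V P θ with hU
  set U' := circuit V P θ' with hU'
  have hUn : ‖U‖ = 1 := norm_circuit V hV P hPH θ
  have hU'n : ‖U'‖ = 1 := norm_circuit V hV P hPH θ'
  have hre : (((Uᴴ * O * U) * ρ).trace).re - (((U'ᴴ * O * U') * ρ).trace).re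
      = (((Uᴴ * O * U - U'ᴴ * O * U') * ρ).trace).re := by
    rw [Matrix.sub_mul, Matrix.trace_sub, Complex.sub_re]
  rw [hre]
  calc |(((Uᴴ * O * U - U'ᴴ * O * U') * ρ).trace).re|
      ≤ ‖((Uᴴ * O * U - U'ᴴ * O * U') * ρ).trace‖ := Complex.abs_re_le_norm _
    _ ≤ ‖Uᴴ * O * U - U'ᴴ * O * U'‖ := trace_norm_le _ _ hρ hρtr
    _ ≤ 2 * ‖O‖ * ‖U - U'‖ := conj_sandwich_norm_le U U' O hUn hU'n
    _ ≤ 2 * ‖O‖ * ((∑ k, |θ k - θ' k|) / 2) := by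
        gcongr
        exact circuit_sub_norm V hV P hPH hPU θ θ'
    _ = ‖O‖ * ∑ k, |θ k - θ' k| := by ring

end QnnAux

namespace QnnAux

variable {N K : ℕ}

/-! ### Euclidean helpers -/

lemma sum_abs_le_sqrt (θ θ' : EuclideanSpace ℝ (Fin K)) :
    ∑ k, |θ k - θ' k| ≤ Real.sqrt K * ‖θ - θ'‖ := by
  have hnorm : ‖θ - θ'‖ = Real.sqrt (∑ k, |θ k - θ' k| ^ 2) := by
    rw [EuclideanSpace.norm_eq]
    congr 1
  have h1 : (∑ k, |θ k - θ' k|) ^ 2 ≤ (K : ℝ) * ∑ k, |θ k - θ' k| ^ 2 := by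
    simpa using sq_sum_le_card_mul_sum_sq (s := Finset.univ) (f := fun k => |θ k - θ' k|)
  have h2 : ∑ k, |θ k - θ' k| = Real.sqrt ((∑ k, |θ k - θ' k|) ^ 2) := by
    rw [Real.sqrt_sq (Finset.sum_nonneg fun k _ => abs_nonneg _)]
  rw [h2, hnorm, ← Real.sqrt_mul (Nat.cast_nonneg K)]
  exact Real.sqrt_le_sqrt h1

lemma norm_le_sqrt_mul (v : EuclideanSpace ℝ (Fin K)) (c : ℝ) (hc : 0 ≤ c)
    (h : ∀ k, |v k| ≤ c) : ‖v‖ ≤ Real.sqrt K * c := by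
  rw [EuclideanSpace.norm_eq]
  calc Real.sqrt (∑ k, ‖v k‖ ^ 2) ≤ Real.sqrt (∑ _k : Fin K, c ^ 2) := by
        refine Real.sqrt_le_sqrt (Finset.sum_le_sum fun k _ => ?_)
        rw [Real.norm_eq_abs]
        exact pow_le_pow_left₀ (abs_nonneg _) (h k) 2
    _ = Real.sqrt K * c := by
        rw [Finset.sum_const, Finset.card_univ, Fintype.card_fin, nsmul_eq_mul,
          Real.sqrt_mul (Nat.cast_nonneg K), Real.sqrt_sq hc]

/-! ### qnnGrad bounds -/

lemma qnnGrad_apply (V : Fin (K + 1) → Matrix (Fin (2^N)) (Fin (2^N)) ℂ)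
    (P : Fin K → Matrix (Fin (2^N)) (Fin (2^N)) ℂ)
    (O ρ : Matrix (Fin (2^N)) (Fin (2^N)) ℂ) (θ : EuclideanSpace ℝ (Fin K)) (j : Fin K) :
    qnnGrad V P O ρ θ j =
      (qnnOut V P O ρ (θ + (Real.pi / 2) • EuclideanSpace.single j 1)
        - qnnOut V P O ρ (θ - (Real.pi / 2) • EuclideanSpace.single j 1)) / 2 := rfl

lemma qnnGrad_norm_le (V : Fin (K + 1) → Matrix (Fin (2^N)) (Fin (2^N)) ℂ)
    (hV : ∀ k, V k ∈ Matrix.unitaryGroup (Fin (2^N)) ℂ)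
    (P : Fin K → Matrix (Fin (2^N)) (Fin (2^N)) ℂ)
    (hPH : ∀ k, (P k).IsHermitian)
    (O ρ : Matrix (Fin (2^N)) (Fin (2^N)) ℂ)
    (hρ : ρ.PosSemidef) (hρtr : ρ.trace = 1) (θ : EuclideanSpace ℝ (Fin K)) :
    ‖qnnGrad V P O ρ θ‖ ≤ Real.sqrt K * ‖O‖ := by
  refine norm_le_sqrt_mul _ _ (norm_nonneg O) fun j => ?_
  rw [qnnGrad_apply, abs_div]
  have h1 := qnnOut_abs_le V hV P hPH O ρ hρ hρtr (θ + (Real.pi / 2) • EuclideanSpace.single j 1)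
  have h2 := qnnOut_abs_le V hV P hPH O ρ hρ hρtr (θ - (Real.pi / 2) • EuclideanSpace.single j 1)
  calc |qnnOut V P O ρ (θ + (Real.pi / 2) • EuclideanSpace.single j 1)
      - qnnOut V P O ρ (θ - (Real.pi / 2) • EuclideanSpace.single j 1)| / |2|
      ≤ (‖O‖ + ‖O‖) / 2 := by
        rw [abs_two]
        gcongr
        exact (abs_sub _ _).trans (add_le_add h1 h2)
    _ = ‖O‖ := by ring

lemma qnnGrad_sub_norm_le (V : Fin (K + 1) → Matrix (Fin (2^N)) (Fin (2^N)) ℂ)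
    (hV : ∀ k, V k ∈ Matrix.unitaryGroup (Fin (2^N)) ℂ)
    (P : Fin K → Matrix (Fin (2^N)) (Fin (2^N)) ℂ)
    (hPH : ∀ k, (P k).IsHermitian)
    (hPU : ∀ k, P k ∈ Matrix.unitaryGroup (Fin (2^N)) ℂ)
    (O ρ : Matrix (Fin (2^N)) (Fin (2^N)) ℂ)
    (hρ : ρ.PosSemidef) (hρtr : ρ.trace = 1) (θ θ' : EuclideanSpace ℝ (Fin K)) :
    ‖qnnGrad V P O ρ θ - qnnGrad V P O ρ θ'‖ ≤ (K : ℝ) * ‖O‖ * ‖θ - θ'‖ := by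
  have hD : (0 : ℝ) ≤ ‖O‖ * ∑ k, |θ k - θ' k| :=
    mul_nonneg (norm_nonneg O) (Finset.sum_nonneg fun k _ => abs_nonneg _)
  have key : ‖qnnGrad V P O ρ θ - qnnGrad V P O ρ θ'‖
      ≤ Real.sqrt K * (‖O‖ * ∑ k, |θ k - θ' k|) := by
    refine norm_le_sqrt_mul _ _ hD fun j => ?_
    have happ : (qnnGrad V P O ρ θ - qnnGrad V P O ρ θ') j
        = qnnGrad V P O ρ θ j - qnnGrad V P O ρ θ' j := by simp [PiLp.sub_apply]
    rw [happ, qnnGrad_apply, qnnGrad_apply]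
    set s := (Real.pi / 2) • EuclideanSpace.single j (1 : ℝ) with hs
    have hplus : ∀ k, (θ + s) k - (θ' + s) k = θ k - θ' k := fun k => by
      simp [PiLp.add_apply]
    have hminus : ∀ k, (θ - s) k - (θ' - s) k = θ k - θ' k := fun k => by
      simp [PiLp.sub_apply]
    have h1 := qnnOut_sub_le V hV P hPH hPU O ρ hρ hρtr (θ + s) (θ' + s)
    have h2 := qnnOut_sub_le V hV P hPH hPU O ρ hρ hρtr (θ - s) (θ' - s)
    rw [Finset.sum_congr rfl fun k _ => by rw [hplus k]] at h1
    rw [Finset.sum_congr rfl fun k _ => by rw [hminus k]] at h2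
    have harr : (qnnOut V P O ρ (θ + s) - qnnOut V P O ρ (θ - s)) / 2
        - (qnnOut V P O ρ (θ' + s) - qnnOut V P O ρ (θ' - s)) / 2
        = ((qnnOut V P O ρ (θ + s) - qnnOut V P O ρ (θ' + s))
          - (qnnOut V P O ρ (θ - s) - qnnOut V P O ρ (θ' - s))) / 2 := by ring
    rw [harr, abs_div, abs_two]
    calc |(qnnOut V P O ρ (θ + s) - qnnOut V P O ρ (θ' + s))
          - (qnnOut V P O ρ (θ - s) - qnnOut V P O ρ (θ' - s))| / 2
        ≤ (‖O‖ * ∑ k, |θ k - θ' k| + ‖O‖ * ∑ k, |θ k - θ' k|) / 2 := by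
          gcongr
          exact (abs_sub _ _).trans (add_le_add h1 h2)
      _ = ‖O‖ * ∑ k, |θ k - θ' k| := by ring
  calc ‖qnnGrad V P O ρ θ - qnnGrad V P O ρ θ'‖
      ≤ Real.sqrt K * (‖O‖ * ∑ k, |θ k - θ' k|) := key
    _ ≤ Real.sqrt K * (‖O‖ * (Real.sqrt K * ‖θ - θ'‖)) := by
        gcongr
        exact sum_abs_le_sqrt θ θ'
    _ = (Real.sqrt K * Real.sqrt K) * ‖O‖ * ‖θ - θ'‖ := by ring
    _ = (K : ℝ) * ‖O‖ * ‖θ - θ'‖ := by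
        rw [Real.mul_self_sqrt (Nat.cast_nonneg K)]

/-! ### Derivative bound of a Lipschitz function -/

lemma abs_deriv_le {Y : Type*} (ℓ dℓ : ℝ → Y → ℝ) (α : ℝ)
    (hLip : ∀ (y : Y) (a b : ℝ), |ℓ a y - ℓ b y| ≤ α * |a - b|)
    (hderiv : ∀ (y : Y) (a : ℝ), HasDerivAt (fun s => ℓ s y) (dℓ a y) a)
    (y : Y) (a : ℝ) : |dℓ a y| ≤ α := by
  have h := hasDerivAt_iff_tendsto_slope.mp (hderiv y a)
  have h2 : Filter.Tendsto (fun b => |slope (fun s => ℓ s y) a b|) (nhdsWithin a {a}ᶜ)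
      (nhds |dℓ a y|) := h.abs
  refine le_of_tendsto h2 (eventually_nhdsWithin_of_forall fun b hb => ?_)
  have hba : b ≠ a := hb
  rw [slope_def_field, div_eq_mul_inv, abs_mul, abs_inv]
  have hpos : 0 < |b - a| := abs_pos.mpr (sub_ne_zero.mpr hba)
  calc |ℓ b y - ℓ a y| * |b - a|⁻¹ ≤ (α * |b - a|) * |b - a|⁻¹ := by
        gcongr
        exact hLip y b a
    _ = α := by field_simp
end QnnAux


open scoped RealInnerProductSpace in
/-- Lemma C.9, Descent Lemma: under Assumptions 1 and 2, if for every
labeled example the map `θ ↦ ℓ(f_θ(x); y)` is differentiable with gradient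
`∇_θ ℓ(f_θ(x); y) = (∂ℓ/∂f)(f_θ(x); y) • ∇_θ f_θ(x)`, then for all `θ₁, θ₂`:
`ℓ(f_{θ₁}(x); y) − ℓ(f_{θ₂}(x); y) ≤ ⟨∇_θ ℓ(f_{θ₂}(x); y), θ₁ − θ₂⟩ + (κ/2)‖θ₁ − θ₂‖²`,
where `κ = α K ‖O‖ + √2 ν K ‖O‖²`. -/
theorem qnn_descent_lemma {N K : ℕ} {Y : Type*}
    (V : Fin (K + 1) → Matrix (Fin (2^N)) (Fin (2^N)) ℂ)
    (hV : ∀ k, V k ∈ Matrix.unitaryGroup (Fin (2^N)) ℂ)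
    (P : Fin K → Matrix (Fin (2^N)) (Fin (2^N)) ℂ)
    (hPH : ∀ k, (P k).IsHermitian)
    (hPU : ∀ k, P k ∈ Matrix.unitaryGroup (Fin (2^N)) ℂ)
    (O : Matrix (Fin (2^N)) (Fin (2^N)) ℂ) (hO : O.IsHermitian)
    (ℓ dℓ : ℝ → Y → ℝ) (α ν : ℝ) (hα : 0 ≤ α) (hν : 0 ≤ ν)
    (hLip : ∀ (y : Y) (a b : ℝ), |ℓ a y - ℓ b y| ≤ α * |a - b|)
    (hderiv : ∀ (y : Y) (a : ℝ), HasDerivAt (fun s => ℓ s y) (dℓ a y) a)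
    (hSmooth : ∀ (y : Y) (a b : ℝ), |dℓ a y - dℓ b y| ≤ ν * |a - b|)
    (ρ : Matrix (Fin (2^N)) (Fin (2^N)) ℂ) (hρ : ρ.PosSemidef) (hρtr : ρ.trace = 1)
    (y : Y)
    -- the map `θ ↦ ℓ(f_θ(x); y)` is differentiable with the stated gradient
    (hgrad : ∀ θ : EuclideanSpace ℝ (Fin K),
      HasGradientAt (fun t => ℓ (qnnOut V P O ρ t) y) (lossGrad V P O dℓ ρ y θ) θ)
    (θ₁ θ₂ : EuclideanSpace ℝ (Fin K)) :
    ℓ (qnnOut V P O ρ θ₁) y - ℓ (qnnOut V P O ρ θ₂) y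
      ≤ ⟪lossGrad V P O dℓ ρ y θ₂, θ₁ - θ₂⟫
        + (α * K * ‖O‖ + Real.sqrt 2 * ν * K * ‖O‖ ^ 2) / 2 * ‖θ₁ - θ₂‖ ^ 2 := by
  classical
  set f : EuclideanSpace ℝ (Fin K) → ℝ := fun t => ℓ (qnnOut V P O ρ t) y with hf
  set g : EuclideanSpace ℝ (Fin K) → EuclideanSpace ℝ (Fin K) := lossGrad V P O dℓ ρ y with hg
  set L : ℝ := α * K * ‖O‖ + ν * K * ‖O‖ ^ 2 with hLdef
  have hLnn : 0 ≤ L := by positivity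
  have hdl : ∀ t, |dℓ (qnnOut V P O ρ t) y| ≤ α := fun t =>
    QnnAux.abs_deriv_le ℓ dℓ α hLip hderiv y _
  have hlip : ∀ x x' : EuclideanSpace ℝ (Fin K), ‖g x - g x'‖ ≤ L * ‖x - x'‖ := by
    intro x x'
    have hdec : g x - g x' =
        (dℓ (qnnOut V P O ρ x) y - dℓ (qnnOut V P O ρ x') y) • qnnGrad V P O ρ x
          + dℓ (qnnOut V P O ρ x') y • (qnnGrad V P O ρ x - qnnGrad V P O ρ x') := by
      rw [hg, lossGrad, lossGrad, sub_smul, smul_sub]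
      abel
    rw [hdec]
    have hsqrtK : Real.sqrt K * Real.sqrt K = (K : ℝ) := Real.mul_self_sqrt (Nat.cast_nonneg K)
    calc ‖(dℓ (qnnOut V P O ρ x) y - dℓ (qnnOut V P O ρ x') y) • qnnGrad V P O ρ x
          + dℓ (qnnOut V P O ρ x') y • (qnnGrad V P O ρ x - qnnGrad V P O ρ x')‖
        ≤ ‖(dℓ (qnnOut V P O ρ x) y - dℓ (qnnOut V P O ρ x') y) • qnnGrad V P O ρ x‖
          + ‖dℓ (qnnOut V P O ρ x') y • (qnnGrad V P O ρ x - qnnGrad V P O ρ x')‖ :=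
          norm_add_le _ _
      _ = |dℓ (qnnOut V P O ρ x) y - dℓ (qnnOut V P O ρ x') y| * ‖qnnGrad V P O ρ x‖
          + |dℓ (qnnOut V P O ρ x') y| * ‖qnnGrad V P O ρ x - qnnGrad V P O ρ x'‖ := by
          rw [norm_smul, norm_smul, Real.norm_eq_abs, Real.norm_eq_abs]
      _ ≤ (ν * (‖O‖ * (Real.sqrt K * ‖x - x'‖))) * (Real.sqrt K * ‖O‖)
          + α * ((K : ℝ) * ‖O‖ * ‖x - x'‖) := by
          refine add_le_add (mul_le_mul ?_ ?_ (norm_nonneg _) (by positivity)) ?_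
          · calc |dℓ (qnnOut V P O ρ x) y - dℓ (qnnOut V P O ρ x') y|
                ≤ ν * |qnnOut V P O ρ x - qnnOut V P O ρ x'| := hSmooth y _ _
              _ ≤ ν * (‖O‖ * ∑ k, |x k - x' k|) := by
                  gcongr
                  exact QnnAux.qnnOut_sub_le V hV P hPH hPU O ρ hρ hρtr x x'
              _ ≤ ν * (‖O‖ * (Real.sqrt K * ‖x - x'‖)) := by
                  gcongr
                  exact QnnAux.sum_abs_le_sqrt x x'
          · exact QnnAux.qnnGrad_norm_le V hV P hPH O ρ hρ hρtr x
          · exact mul_le_mul (hdl x') (QnnAux.qnnGrad_sub_norm_le V hV P hPH hPU O ρ hρ hρtr x x')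
              (norm_nonneg _) hα
      _ = L * ‖x - x'‖ := by
          rw [hLdef]
          have : ν * (‖O‖ * (Real.sqrt K * ‖x - x'‖)) * (Real.sqrt K * ‖O‖)
              = ν * (Real.sqrt K * Real.sqrt K) * ‖O‖ ^ 2 * ‖x - x'‖ := by ring
          rw [this, hsqrtK]
          ring
  have hdesc := descent_core f g L hLnn hgrad hlip θ₂ θ₁
  have hLκ : L / 2 * ‖θ₁ - θ₂‖ ^ 2
      ≤ (α * K * ‖O‖ + Real.sqrt 2 * ν * K * ‖O‖ ^ 2) / 2 * ‖θ₁ - θ₂‖ ^ 2 := by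
    have h2 : (1 : ℝ) ≤ Real.sqrt 2 := by
      rw [show (1 : ℝ) = Real.sqrt 1 from (Real.sqrt_one).symm]
      exact Real.sqrt_le_sqrt (by norm_num)
    have : L ≤ α * K * ‖O‖ + Real.sqrt 2 * ν * K * ‖O‖ ^ 2 := by
      rw [hLdef]
      have hνK : ν * K * ‖O‖ ^ 2 ≤ Real.sqrt 2 * (ν * K * ‖O‖ ^ 2) := by
        nlinarith [mul_nonneg (mul_nonneg hν (Nat.cast_nonneg K)) (sq_nonneg ‖O‖)]
      nlinarith [mul_nonneg (mul_nonneg hν (Nat.cast_nonneg K)) (sq_nonneg ‖O‖)]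
    nlinarith [sq_nonneg ‖θ₁ - θ₂‖]
  calc ℓ (qnnOut V P O ρ θ₁) y - ℓ (qnnOut V P O ρ θ₂) y
      ≤ ⟪g θ₂, θ₁ - θ₂⟫ + L / 2 * ‖θ₁ - θ₂‖ ^ 2 := hdesc
    _ ≤ ⟪lossGrad V P O dℓ ρ y θ₂, θ₁ - θ₂⟫
        + (α * K * ‖O‖ + Real.sqrt 2 * ν * K * ‖O‖ ^ 2) / 2 * ‖θ₁ - θ₂‖ ^ 2 := by
        rw [hg]
        exact add_le_add le_rfl hLκ

end
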